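/- arXiv:math/0204259 — 4 statements merged into one kernel-verified Lean document; each statement's English description precedes it below -/
import Mathlib

section
/- Let F = x²y − x²z − xy² + xz² + y³ − y²t + yzt ∈ ℂ[x, y, z, t]. For every nonzero (x, y, z, t) ∈ ℂ⁴, the four partial derivatives ∂F/∂x, ∂F/∂y, ∂F/∂z, ∂F/∂t all vanish at (x, y, z, t) if and only if x = 0, y = 0 and z = 0. Consequently the cubic surface {F = 0} ⊂ ℙ³ has exactly one singular point, namely (0 : 0 : 0 : 1). -/
open MvPolynomial

/-- The cubic form defining the surface of class `T₄`:
`F = x²y − x²z − xy² + xz² + y³ − y²t + yzt`, with variables `x = X 0`, `y = X 1`,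
`z = X 2`, `t = X 3`. -/
noncomputable def T4cubic : MvPolynomial (Fin 4) ℂ :=
  X 0 ^ 2 * X 1 - X 0 ^ 2 * X 2 - X 0 * X 1 ^ 2 + X 0 * X 2 ^ 2 + X 1 ^ 3
    - X 1 ^ 2 * X 3 + X 1 * X 2 * X 3

/-- For a nonzero point `v = (x, y, z, t) ∈ ℂ⁴`, all four partial derivatives of
`F = x²y − x²z − xy² + xz² + y³ − y²t + yzt` vanish at `v` if and only if
`x = 0`, `y = 0` and `z = 0`; so the surface `{F = 0} ⊂ ℙ³` has exactly one
singular point, namely `(0 : 0 : 0 : 1)`. -/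
theorem T4_unique_singular_point (v : Fin 4 → ℂ) (hv : v ≠ 0) :
    (∀ i : Fin 4, eval v (pderiv i T4cubic) = 0) ↔ (v 0 = 0 ∧ v 1 = 0 ∧ v 2 = 0) := by
  constructor
  · intro h
    have h0 := h 0; have h1 := h 1; have h2 := h 2; have h3 := h 3
    simp [T4cubic, pderiv_mul, pderiv_pow, pderiv_X, Pi.single_apply] at h0 h1 h2 h3
    have hy : v 1 = 0 := by
      have hcube : (v 1) ^ 3 = 0 := by
        linear_combination (v 1 / 3) * h1 + (v 1 / 3) * h2 - ((2 * v 0 + v 3) / 3) * h3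
      exact pow_eq_zero_iff (by norm_num) |>.mp hcube
    have hxz : v 0 * (2 * v 2 - v 0) = 0 := by
      linear_combination h2 - v 3 * hy
    rcases mul_eq_zero.mp hxz with hx | hA
    · have hz : v 2 = 0 := by
        have : (v 2) ^ 2 = 0 := by
          linear_combination h0 + (v 1 - 2 * v 0) * hy + 2 * v 2 * hx
        exact pow_eq_zero_iff (by norm_num) |>.mp this
      exact ⟨hx, hy, hz⟩
    · have hz : v 2 = 0 := by
        have : (v 2) ^ 2 = 0 := by
          linear_combination (-1/3) * h0 + ((2 * v 0 - v 1) / 3) * hy + (2 * v 2 / 3) * hA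
        exact pow_eq_zero_iff (by norm_num) |>.mp this
      have hx : v 0 = 0 := by linear_combination -hA + 2 * hz
      exact ⟨hx, hy, hz⟩
  · rintro ⟨hx, hy, hz⟩ i
    fin_cases i <;>
      simp [T4cubic, pderiv_mul, pderiv_pow, pderiv_X, Pi.single_apply, hx, hy, hz]
end

section
/- For (x, y, z, t) ∈ ℂ⁴ let N(x,y,z,t) be the 3×3 matrix with rows (t, x, y), (y + z, −y, 2x + t), (y, 0, x + y − z), and let M(x,y,z,t) = [[0, N], [−Nᵀ, 0]] be the associated 6×6 block matrix. Then for every nonzero (x, y, z, t) ∈ ℂ⁴ the rank of M(x,y,z,t) is at least 4. -/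
open Matrix

/-- The `3 × 3` matrix of linear forms giving the determinantal representation
of the cubic surface of class `T₄`. -/
def T4N (x y z t : ℂ) : Matrix (Fin 3) (Fin 3) ℂ :=
  !![t, x, y;
     y + z, -y, 2 * x + t;
     y, 0, x + y - z]

/-- The associated `6 × 6` skew-symmetric block matrix `M = [[0, N], [−Nᵀ, 0]]`. -/
def T4M (x y z t : ℂ) : Matrix (Fin 3 ⊕ Fin 3) (Fin 3 ⊕ Fin 3) ℂ :=
  Matrix.fromBlocks 0 (T4N x y z t) (-(T4N x y z t)ᵀ) 0

/-!
If two rows `r` and two columns `c` of `N` carry a nonzero `2 × 2` minor `S`, then the rows and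
columns `r ⊕ c` of `M = [[0, N], [−Nᵀ, 0]]` form the invertible `4 × 4` matrix `[[0, S], [−Sᵀ, 0]]`,
so `rank M ≥ 4`. It remains to see that the `2 × 2` minors of `N` vanish simultaneously only at
the origin, a short case analysis on `y`, `x`, `t`, `z`.
-/

namespace Matrix

theorem rank_fromBlocks_zero_zero {R l m n o : Type*} [CommSemiring R] [Fintype n] [Fintype o]
    (B : Matrix m n R) (C : Matrix l o R) :
    (fromBlocks 0 B C 0).rank = (fromBlocks B 0 0 C).rank := by
  rw [← rank_submatrix (fromBlocks B 0 0 C) (Equiv.refl _) (Equiv.sumComm o n)]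
  simp

variable {R : Type*} [CommRing R] [StrongRankCondition R]

theorem rank_fromBlocks_zero_zero_of_isUnit {k : Type*} [Fintype k] [DecidableEq k]
    {B C : Matrix k k R} (hB : IsUnit B) (hC : IsUnit C) :
    (fromBlocks 0 B C 0).rank = 2 * Fintype.card k := by
  rw [rank_fromBlocks_zero_zero, rank_of_isUnit _ (isUnit_fromBlocks_zero₂₁.mpr ⟨hB, hC⟩),
    Fintype.card_sum, two_mul]

theorem two_mul_card_le_rank_fromBlocks_neg_transpose {k m n : Type*} [Fintype k]
    [DecidableEq k] [Fintype m] [Fintype n] (N : Matrix m n R) (r : k → m) (c : k → n)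
    (h : IsUnit (N.submatrix r c)) :
    2 * Fintype.card k ≤ (fromBlocks 0 N (-Nᵀ) 0).rank := by
  set S := N.submatrix r c
  have hsub : (fromBlocks 0 N (-Nᵀ) 0).submatrix (Sum.map r c) (Sum.map r c) =
      fromBlocks 0 S (-Sᵀ) 0 := by
    ext (i | i) (j | j) <;> rfl
  calc 2 * Fintype.card k = (fromBlocks 0 S (-Sᵀ) 0).rank :=
        (rank_fromBlocks_zero_zero_of_isUnit h ((isUnit_transpose S).mpr h).neg).symm
    _ ≤ (fromBlocks 0 N (-Nᵀ) 0).rank := hsub ▸ rank_submatrix_le _ _ _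

end Matrix

theorem T4N_exists_minor_ne_zero {x y z t : ℂ} (h : ¬(x = 0 ∧ y = 0 ∧ z = 0 ∧ t = 0)) :
    ∃ r c : Fin 2 → Fin 3, ((T4N x y z t).submatrix r c).det ≠ 0 := by
  -- the minors used are `y²`, `−z²`, `t²`, `x²` and `−xz`
  by_cases hy : y = 0
  swap
  · exact ⟨![1, 2], ![0, 1], by rw [det_fin_two]; simpa [T4N] using hy⟩
  subst hy
  by_cases hx : x = 0
  · subst hx
    by_cases ht : t = 0
    · subst ht
      exact ⟨![1, 2], ![0, 2], by rw [det_fin_two]; simpa [T4N] using h⟩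
    · exact ⟨![0, 1], ![0, 2], by rw [det_fin_two]; simpa [T4N] using ht⟩
  by_cases hz : z = 0
  · subst hz
    exact ⟨![0, 2], ![1, 2], by rw [det_fin_two]; simpa [T4N] using hx⟩
  · exact ⟨![0, 1], ![0, 1], by rw [det_fin_two]; simpa [T4N] using ⟨hx, hz⟩⟩

/-- For every nonzero `(x, y, z, t) ∈ ℂ⁴`, the rank of `M(x,y,z,t)` is at least `4`:
the web spanned by the coefficient matrices of `M` is disjoint from `G(3,5)`. -/
theorem T4M_rank_ge_four (x y z t : ℂ) (h : ¬(x = 0 ∧ y = 0 ∧ z = 0 ∧ t = 0)) :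
    4 ≤ (T4M x y z t).rank := by
  obtain ⟨r, c, hminor⟩ := T4N_exists_minor_ne_zero h
  have hunit : IsUnit ((T4N x y z t).submatrix r c) :=
    (isUnit_iff_isUnit_det _).mpr hminor.isUnit
  simpa [T4M] using two_mul_card_le_rank_fromBlocks_neg_transpose _ r c hunit
end

section
/- Fix α, β, γ, δ ∈ ℂ and set L(x,y,z,t) = αx + βy + γz + δt. For (x, y, z, t) ∈ ℂ⁴ let N(x,y,z,t) be the 3×3 matrix with rows (x, y, 0), (t, z, 0), (0, 0, L(x,y,z,t)), and let M(x,y,z,t) = [[0, N], [−Nᵀ, 0]] be the associated 6×6 block matrix. Then for every nonzero (x, y, z, t) ∈ ℂ⁴, the rank of M(x,y,z,t) is at most 2 if and only if xz − yt = 0 and L(x,y,z,t) = 0. -/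
open Matrix

/-- The `3 × 3` matrix of linear forms giving a determinantal representation of the
union of the quadric `xz − yt = 0` with the plane `L = αx + βy + γz + δt = 0`. -/
def qpN (α β γ δ : ℂ) (x y z t : ℂ) : Matrix (Fin 3) (Fin 3) ℂ :=
  !![x, y, 0;
     t, z, 0;
     0, 0, α * x + β * y + γ * z + δ * t]

/-- The associated `6 × 6` skew-symmetric block matrix `M = [[0, N], [−Nᵀ, 0]]`. -/
def qpM (α β γ δ : ℂ) (x y z t : ℂ) : Matrix (Fin 3 ⊕ Fin 3) (Fin 3 ⊕ Fin 3) ℂ :=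
  Matrix.fromBlocks 0 (qpN α β γ δ x y z t) (-(qpN α β γ δ x y z t)ᵀ) 0

/-!
Where `xz = yt` and `L = 0`, the matrix `N` is an outer product `u vᵀ`, and then
`M = c₁ c₂ᵀ − c₂ c₁ᵀ` with `c₁ = (u, 0)`, `c₂ = (0, v)` has rank at most `2`.
Conversely, the `3 × 3` minor of `M` on rows `(i, i', j'')` and columns `(j, j', i'')` is
`−N i'' j''` times a `2 × 2` minor of `N`, so `rank M ≤ 2` kills every product of an entry of `N`
with a `2 × 2` minor of `N`. Taking the entries `x, y, z, t` against the minor `xz − yt`, and the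
entry `L` against the minors `xL, yL, zL, tL`, gives both equations since `(x, y, z, t) ≠ 0`.
-/

namespace Matrix

theorem rank_fromBlocks_zero_vecMulVec_le_two {m n R : Type*} [Fintype m] [Fintype n]
    [CommRing R] [StrongRankCondition R] (u : m → R) (v : n → R) :
    (fromBlocks 0 (vecMulVec u v) (-(vecMulVec u v)ᵀ) 0).rank ≤ 2 := by
  let A : Matrix (m ⊕ n) (Fin 2) R := of fun k => ![Sum.elim u 0 k, Sum.elim 0 v k]
  let B : Matrix (Fin 2) (m ⊕ n) R := of ![Sum.elim 0 v, -Sum.elim u 0]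
  have hAB : fromBlocks 0 (vecMulVec u v) (-(vecMulVec u v)ᵀ) 0 = A * B := by
    ext (i | i) (j | j) <;> simp [A, B, mul_apply, Fin.sum_univ_two, vecMulVec_apply, mul_comm]
  calc _ = (A * B).rank := by rw [hAB]
    _ ≤ Fintype.card (Fin 2) := (rank_mul_le_left A B).trans (rank_le_card_width A)
    _ = 2 := Fintype.card_fin 2

theorem le_rank_of_det_submatrix_ne_zero {m n K : Type*} [Fintype n] [Field K] {k : ℕ}
    (A : Matrix m n K) (r : Fin k → m) (c : Fin k → n) (h : (A.submatrix r c).det ≠ 0) :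
    k ≤ A.rank := by
  simpa [rank_of_det_ne_zero h] using rank_submatrix_le A r c

theorem det_submatrix_fromBlocks_zero_neg_transpose {m n R : Type*} [CommRing R]
    (N : Matrix m n R) (i i' i'' : m) (j j' j'' : n) :
    ((fromBlocks 0 N (-Nᵀ) 0).submatrix ![.inl i, .inl i', .inr j'']
      ![.inr j, .inr j', .inl i'']).det =
      -N i'' j'' * (N i j * N i' j' - N i j' * N i' j) := by
  rw [det_fin_three]
  simp only [submatrix_apply, cons_val_zero, cons_val_one, cons_val, fromBlocks_apply₁₁,
    fromBlocks_apply₁₂, fromBlocks_apply₂₁, fromBlocks_apply₂₂, neg_apply, transpose_apply,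
    zero_apply]
  ring

theorem entry_mul_minor_eq_zero_of_rank_fromBlocks_le_two {m n K : Type*} [Fintype m]
    [Fintype n] [Field K] {N : Matrix m n K} (hr : (fromBlocks 0 N (-Nᵀ) 0).rank ≤ 2)
    (i i' i'' : m) (j j' j'' : n) : N i'' j'' * (N i j * N i' j' - N i j' * N i' j) = 0 := by
  by_contra hne
  have h3 : 3 ≤ (fromBlocks 0 N (-Nᵀ) 0).rank :=
    le_rank_of_det_submatrix_ne_zero _ _ _ <| by
      rwa [det_submatrix_fromBlocks_zero_neg_transpose, neg_mul, neg_ne_zero]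
  omega

end Matrix

theorem exists_mul_eq_of_mul_sub_mul_eq_zero {K : Type*} [Field K] {a b c d : K}
    (h : a * d - b * c = 0) :
    ∃ p q r s : K, a = p * r ∧ b = p * s ∧ c = q * r ∧ d = q * s := by
  by_cases ha : a = 0
  · obtain hb | hc := mul_eq_zero.1 (show b * c = 0 by simpa [ha] using h)
    · exact ⟨0, 1, c, d, by simp [ha, hb]⟩
    · exact ⟨b, d, 0, 1, by simp [ha, hc]⟩
  · refine ⟨a, c, 1, b / a, by simp, by field_simp, by simp, ?_⟩
    field_simp
    linear_combination h

/-- For a nonzero `(x, y, z, t) ∈ ℂ⁴`, the rank of `M(x,y,z,t)` is at most `2` if and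
only if `xz − yt = 0` and `L(x,y,z,t) = 0`: the rank drops to `2` exactly along the
conic `Q ∩ π`. -/
theorem qpM_rank_le_two_iff (α β γ δ : ℂ) (x y z t : ℂ)
    (h : ¬(x = 0 ∧ y = 0 ∧ z = 0 ∧ t = 0)) :
    (qpM α β γ δ x y z t).rank ≤ 2 ↔
      x * z - y * t = 0 ∧ α * x + β * y + γ * z + δ * t = 0 := by
  constructor
  · intro hr
    have key := entry_mul_minor_eq_zero_of_rank_fromBlocks_le_two (N := qpN α β γ δ x y z t) hr
    have hq : x * z - y * t = 0 := by
      by_contra hq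
      refine h ⟨?_, ?_, ?_, ?_⟩
      · simpa [qpN, hq] using key 0 1 0 0 1 0
      · simpa [qpN, hq] using key 0 1 0 0 1 1
      · simpa [qpN, hq] using key 0 1 1 0 1 1
      · simpa [qpN, hq] using key 0 1 1 0 1 0
    refine ⟨hq, ?_⟩
    by_contra hL
    refine h ⟨?_, ?_, ?_, ?_⟩
    · simpa [qpN, hL] using key 0 2 2 0 2 2
    · simpa [qpN, hL] using key 0 2 2 1 2 2
    · simpa [qpN, hL] using key 1 2 2 1 2 2
    · simpa [qpN, hL] using key 1 2 2 0 2 2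
  · rintro ⟨hq, hL⟩
    obtain ⟨p, q, r, s, rfl, rfl, rfl, rfl⟩ := exists_mul_eq_of_mul_sub_mul_eq_zero hq
    have hN : qpN α β γ δ (p * r) (p * s) (q * s) (q * r) = vecMulVec ![p, q, 0] ![r, s, 0] := by
      ext i j
      fin_cases i <;> fin_cases j <;> simp [qpN, vecMulVec_apply, hL]
    rw [qpM, hN]
    exact rank_fromBlocks_zero_vecMulVec_le_two _ _
end

section
/- For every c ∈ ℂ there exists a 3×3 matrix N whose entries are homogeneous polynomials of degree 1 in ℂ[x, y, z] (linear forms in the three variables x, y, z only) such that det N = y²z − x(x − z)(x − cz). -/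
open MvPolynomial

/-- The equation `y²z − x(x−z)(x−cz)` of a plane cubic in Weierstrass normal form
(with variables `x = X 0`, `y = X 1`, `z = X 2`) can be written as the determinant of
a `3 × 3` matrix of linear forms in the three variables `x, y, z` only. -/
theorem weierstrass_cubic_determinantal (c : ℂ) :
    ∃ N : Matrix (Fin 3) (Fin 3) (MvPolynomial (Fin 3) ℂ),
      (∀ i j, (N i j).IsHomogeneous 1) ∧
      N.det = (X 1 : MvPolynomial (Fin 3) ℂ) ^ 2 * X 2
        - X 0 * (X 0 - X 2) * (X 0 - C c * X 2) := by
  refine ⟨!![-(X 0), X 1, 0; 0, X 0 - X 2, X 2; X 1, 0, X 0 - C c * X 2], ?_, ?_⟩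
  · intro i j
    fin_cases i <;> fin_cases j <;> simp <;>
      first
        | exact isHomogeneous_zero _ _ _
        | exact (isHomogeneous_X _ _).neg
        | exact isHomogeneous_X _ _
        | exact (isHomogeneous_X _ _).sub (isHomogeneous_X _ _)
        | exact (isHomogeneous_X _ _).sub (by simpa using (isHomogeneous_C _ c).mul (isHomogeneous_X _ 2))
  · rw [Matrix.det_fin_three]
    simp
    ring
end
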